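/- With J_k(λ) = ∫_0^∞ u^k exp(-u - u²/(2λ²)) du, for every λ > 0: J_2(λ)/J_0(λ) ≤ 1/(1/2 + 1/λ²) and J_2(λ)/J_0(λ) ≥ 1/(1/2 + 3/(2λ²) + 1/λ²). -/

import Mathlib

/-!
Integrating `d/du (u^(k+1) e^(-u - u²/(2λ²)))` over `(0, ∞)` gives the recurrence
`(k+1) J_k = J_{k+1} + J_{k+2}/λ²`; as every `J_k` is positive, `J_{k+1} ≤ (k+1) J_k`.
So `J_1` in `J_0 = J_1 + J_2/λ²` is pinned by
`J_2/2 ≤ J_1 = J_2/2 + J_3/(2λ²) ≤ J_2/2 + 3 J_2/(2λ²)`.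
-/

open MeasureTheory Set

noncomputable def J (k : ℕ) (lam : ℝ) : ℝ :=
  ∫ u in Set.Ioi (0:ℝ), u^k * Real.exp (-u - u^2/(2*lam^2))

open Filter Topology Real

noncomputable def jIntegrand (k : ℕ) (lam u : ℝ) : ℝ :=
  u ^ k * exp (-u - u ^ 2 / (2 * lam ^ 2))

lemma J_eq_integral_jIntegrand (k : ℕ) (lam : ℝ) :
    J k lam = ∫ u in Ioi 0, jIntegrand k lam u :=
  rfl

lemma continuous_jIntegrand (k : ℕ) (lam : ℝ) : Continuous (jIntegrand k lam) := by
  unfold jIntegrand; fun_prop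

lemma jIntegrand_pos (k : ℕ) (lam : ℝ) {u : ℝ} (hu : 0 < u) : 0 < jIntegrand k lam u := by
  unfold jIntegrand; positivity

lemma jIntegrand_le (k : ℕ) (lam : ℝ) {u : ℝ} (hu : 0 ≤ u) :
    jIntegrand k lam u ≤ u ^ k * exp (-u) := by
  unfold jIntegrand
  gcongr
  linarith [show 0 ≤ u ^ 2 / (2 * lam ^ 2) by positivity]

lemma integrableOn_pow_mul_exp_neg (k : ℕ) :
    IntegrableOn (fun u : ℝ => u ^ k * exp (-u)) (Ioi 0) := by
  have := integrableOn_rpow_mul_exp_neg_rpow (s := k) (p := 1)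
    (by linarith [k.cast_nonneg (α := ℝ)]) one_pos
  simpa [rpow_natCast] using this

lemma integrableOn_jIntegrand (k : ℕ) (lam : ℝ) : IntegrableOn (jIntegrand k lam) (Ioi 0) := by
  refine (integrableOn_pow_mul_exp_neg k).mono'
    (continuous_jIntegrand k lam).aestronglyMeasurable ?_
  filter_upwards [ae_restrict_mem measurableSet_Ioi] with u hu
  rw [Real.norm_of_nonneg (jIntegrand_pos k lam hu).le]
  exact jIntegrand_le k lam hu.le

lemma J_pos (k : ℕ) (lam : ℝ) : 0 < J k lam := by
  rw [J_eq_integral_jIntegrand, setIntegral_pos_iff_support_of_nonneg_ae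
    ((ae_restrict_mem measurableSet_Ioi).mono fun u hu => (jIntegrand_pos k lam hu).le)
    (integrableOn_jIntegrand k lam)]
  have hsupp : Ioi 0 ⊆ Function.support (jIntegrand k lam) := fun u hu =>
    (jIntegrand_pos k lam hu).ne'
  simp [inter_eq_right.2 hsupp]

lemma tendsto_jIntegrand_atTop (k : ℕ) (lam : ℝ) :
    Tendsto (jIntegrand k lam) atTop (𝓝 0) := by
  refine squeeze_zero' ?_ ?_ (tendsto_pow_mul_exp_neg_atTop_nhds_zero k)
  · filter_upwards [eventually_gt_atTop 0] with u hu using (jIntegrand_pos k lam hu).le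
  · filter_upwards [eventually_ge_atTop 0] with u hu using jIntegrand_le k lam hu

lemma hasDerivAt_jIntegrand_succ (k : ℕ) (lam u : ℝ) :
    HasDerivAt (jIntegrand (k + 1) lam)
      ((k + 1) * jIntegrand k lam u - jIntegrand (k + 1) lam u -
        jIntegrand (k + 2) lam u / lam ^ 2) u := by
  have hexponent : HasDerivAt (fun v => -v - v ^ 2 / (2 * lam ^ 2)) (-1 - u / lam ^ 2) u :=
    ((hasDerivAt_neg u).sub ((hasDerivAt_pow 2 u).div_const (2 * lam ^ 2))).congr_deriv (by ring)
  refine ((hasDerivAt_pow (k + 1) u).mul hexponent.exp).congr_deriv ?_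
  simp only [jIntegrand]
  push_cast
  ring

lemma J_recurrence (k : ℕ) (lam : ℝ) :
    (k + 1) * J k lam = J (k + 1) lam + J (k + 2) lam / lam ^ 2 := by
  have h₀ : IntegrableOn (fun u => (k + 1) * jIntegrand k lam u) (Ioi 0) :=
    (integrableOn_jIntegrand k lam).const_mul _
  have h₁ : IntegrableOn (fun u => jIntegrand (k + 1) lam u) (Ioi 0) :=
    integrableOn_jIntegrand (k + 1) lam
  have h₀₁ : IntegrableOn (fun u => (k + 1) * jIntegrand k lam u - jIntegrand (k + 1) lam u)
    (Ioi 0) := h₀.sub h₁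
  have h₂ : IntegrableOn (fun u => jIntegrand (k + 2) lam u / lam ^ 2) (Ioi 0) :=
    (integrableOn_jIntegrand (k + 2) lam).div_const _
  have key := integral_Ioi_of_hasDerivAt_of_tendsto
    (continuous_jIntegrand (k + 1) lam).continuousWithinAt
    (fun u _ => hasDerivAt_jIntegrand_succ k lam u) (h₀₁.sub h₂)
    (tendsto_jIntegrand_atTop (k + 1) lam)
  rw [integral_sub h₀₁ h₂, integral_sub h₀ h₁, integral_const_mul, integral_div] at key
  simp only [jIntegrand, zero_pow k.succ_ne_zero, zero_mul, sub_zero] at key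
  simp only [J_eq_integral_jIntegrand, jIntegrand]
  linarith

lemma J_succ_le (k : ℕ) (lam : ℝ) : J (k + 1) lam ≤ (k + 1) * J k lam := by
  have := div_nonneg (J_pos (k + 2) lam).le (sq_nonneg lam)
  linarith [J_recurrence k lam]

theorem stmt3_general (lam : ℝ) :
    J 2 lam / J 0 lam ≤ 1 / (1/2 + 1/lam^2) ∧
    1 / (1/2 + 3/(2*lam^2) + 1/lam^2) ≤ J 2 lam / J 0 lam := by
  have h₀ := J_recurrence 0 lam
  have h₁ := J_recurrence 1 lam
  have h₂₁ := J_succ_le 1 lam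
  have h₃₂ := div_le_div_of_nonneg_right (J_succ_le 2 lam) (sq_nonneg lam)
  push_cast at h₀ h₁ h₂₁ h₃₂
  constructor
  · rw [div_le_div_iff₀ (J_pos 0 lam) (by positivity)]
    linear_combination h₂₁ / 2 - h₀
  · rw [div_le_div_iff₀ (by positivity) (J_pos 0 lam)]
    linear_combination h₀ + h₁ / 2 + h₃₂ / 2

theorem stmt3 (lam : ℝ) (hlam : 0 < lam) :
    J 2 lam / J 0 lam ≤ 1 / (1/2 + 1/lam^2) ∧
    1 / (1/2 + 3/(2*lam^2) + 1/lam^2) ≤ J 2 lam / J 0 lam :=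
  stmt3_general lam
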